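/- arXiv:2211.05027 — 2 statements merged into one kernel-verified Lean document; each statement's English description precedes it below -/
import Mathlib

section
/- Let K, L, λ₁ be positive real numbers and suppose λ₁ < λ₂ < 2(√10 + 3)λ₁. Then λ₃ := ( -√(K(4λ₁² + 12λ₁λ₂ - λ₂²)(K(4λ₁² + 12λ₁λ₂ - λ₂²) + 4Lλ₁(λ₂ - λ₁))) + K(4λ₁² + 12λ₁λ₂ - λ₂²) - 2Lλ₁² + 2Lλ₁λ₂ ) / (2Lλ₁) is a positive real number satisfying K(-4λ₁² - 12λ₁λ₂ + λ₂²)λ₃ + Lλ₁(λ₁ - λ₂ + λ₃)² = 0. -/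
theorem stmt_5 (K L l1 l2 : ℝ) (hK : 0 < K) (hL : 0 < L) (h1 : 0 < l1)
    (h12 : l1 < l2) (h2 : l2 < 2 * (Real.sqrt 10 + 3) * l1) :
    let l3 := (-Real.sqrt (K * (4 * l1 ^ 2 + 12 * l1 * l2 - l2 ^ 2) *
        (K * (4 * l1 ^ 2 + 12 * l1 * l2 - l2 ^ 2) + 4 * L * l1 * (l2 - l1))) +
        K * (4 * l1 ^ 2 + 12 * l1 * l2 - l2 ^ 2) - 2 * L * l1 ^ 2 + 2 * L * l1 * l2) /
        (2 * L * l1)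
    0 < l3 ∧
      K * (-4 * l1 ^ 2 - 12 * l1 * l2 + l2 ^ 2) * l3 +
        L * l1 * (l1 - l2 + l3) ^ 2 = 0 := by
  intro l3
  have hs10 : Real.sqrt 10 ^ 2 = 10 := Real.sq_sqrt (by norm_num)
  have hs10' : (3:ℝ) < Real.sqrt 10 := by nlinarith [Real.sqrt_nonneg 10]
  have h2' : 0 < 2 * (Real.sqrt 10 + 3) * l1 - l2 := by linarith
  have hP : 0 < 4 * l1 ^ 2 + 12 * l1 * l2 - l2 ^ 2 := by
    nlinarith [mul_pos h2' (lt_trans h1 h12), mul_pos (mul_pos h2' h1) (sub_pos.mpr hs10'),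
      mul_pos h1 h1, hs10]
  have hA : 0 < K * (4 * l1 ^ 2 + 12 * l1 * l2 - l2 ^ 2) := mul_pos hK hP
  set A := K * (4 * l1 ^ 2 + 12 * l1 * l2 - l2 ^ 2) with hAdef
  have hC : 0 < 4 * L * l1 * (l2 - l1) := by
    have := mul_pos (mul_pos hL h1) (sub_pos.mpr h12); nlinarith
  have hX : 0 ≤ A * (A + 4 * L * l1 * (l2 - l1)) :=
    le_of_lt (mul_pos hA (by nlinarith))
  set s := Real.sqrt (A * (A + 4 * L * l1 * (l2 - l1))) with hsdef
  have hs2 : s ^ 2 = A * (A + 4 * L * l1 * (l2 - l1)) := Real.sq_sqrt hX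
  have hsn : 0 ≤ s := Real.sqrt_nonneg _
  have hslt : s < A + 2 * L * l1 * (l2 - l1) := by
    rw [hsdef]
    rw [show A + 2 * L * l1 * (l2 - l1) = A + 2 * L * l1 * (l2 - l1) from rfl]
    apply (Real.sqrt_lt' (by nlinarith)).mpr
    nlinarith
  have hden : (2 * L * l1) ≠ 0 := by positivity
  have hl3 : l3 = (-s + A - 2 * L * l1 ^ 2 + 2 * L * l1 * l2) / (2 * L * l1) := rfl
  constructor
  · rw [hl3]
    apply div_pos _ (by positivity)
    nlinarith
  · rw [hl3]
    have hKe : K * (-4 * l1 ^ 2 - 12 * l1 * l2 + l2 ^ 2) = -A := by rw [hAdef]; ring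
    rw [hKe]
    field_simp
    nlinarith [hs2]
end

section
/- Let K, L > 0 and λ₁ > 0. Set λ₂ := λ₁(6 - 2L/K + (2/K)√(10K² - 5KL + L²)) and λ₃ := λ₁(5 - 2L/K + (2/K)√(10K² - 5KL + L²)). Then λ₂ > 0, λ₃ > 0, and K(-4λ₁² - 12λ₁λ₂ + λ₂²)λ₃ + Lλ₁(-λ₁ + λ₂ + λ₃)² = 0. -/
theorem stmt_8 (K L l1 : ℝ) (hK : 0 < K) (hL : 0 < L) (h1 : 0 < l1) :
    let l2 := l1 * (6 - 2 * L / K + (2 / K) * Real.sqrt (10 * K ^ 2 - 5 * K * L + L ^ 2))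
    let l3 := l1 * (5 - 2 * L / K + (2 / K) * Real.sqrt (10 * K ^ 2 - 5 * K * L + L ^ 2))
    0 < l2 ∧ 0 < l3 ∧
      K * (-4 * l1 ^ 2 - 12 * l1 * l2 + l2 ^ 2) * l3 +
        L * l1 * (-l1 + l2 + l3) ^ 2 = 0 := by
  intro l2 l3
  have hK' : K ≠ 0 := ne_of_gt hK
  set s := Real.sqrt (10 * K ^ 2 - 5 * K * L + L ^ 2) with hsdef
  have hD : 0 ≤ 10 * K ^ 2 - 5 * K * L + L ^ 2 := by nlinarith [sq_nonneg (2 * L - 5 * K), sq_nonneg K]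
  have hs : s ^ 2 = 10 * K ^ 2 - 5 * K * L + L ^ 2 := Real.sq_sqrt hD
  have hs0 : 0 ≤ s := Real.sqrt_nonneg _
  have h2 : 0 < l2 := by
    have hlt : 2 * L - 6 * K < 2 * s := by nlinarith [sq_nonneg (K + L)]
    show 0 < l1 * (6 - 2 * L / K + (2 / K) * s)
    have heq : 6 - 2 * L / K + (2 / K) * s = (6 * K - 2 * L + 2 * s) / K := by
      field_simp
    have hpos : 0 < 6 - 2 * L / K + (2 / K) * s := by
      rw [heq]; exact div_pos (by linarith) hK
    positivity
  have h3 : 0 < l3 := by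
    have hlt : 2 * L - 5 * K < 2 * s := by nlinarith [sq_nonneg K]
    show 0 < l1 * (5 - 2 * L / K + (2 / K) * s)
    have heq : 5 - 2 * L / K + (2 / K) * s = (5 * K - 2 * L + 2 * s) / K := by
      field_simp
    have hpos : 0 < 5 - 2 * L / K + (2 / K) * s := by
      rw [heq]; exact div_pos (by linarith) hK
    positivity
  refine ⟨h2, h3, ?_⟩
  show K * (-4 * l1 ^ 2 - 12 * l1 * (l1 * (6 - 2 * L / K + (2 / K) * s)) +
      (l1 * (6 - 2 * L / K + (2 / K) * s)) ^ 2) * (l1 * (5 - 2 * L / K + (2 / K) * s)) +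
      L * l1 * (-l1 + l1 * (6 - 2 * L / K + (2 / K) * s) + l1 * (5 - 2 * L / K + (2 / K) * s)) ^ 2 = 0
  rw [show (2:ℝ) * L / K = 2 * (L / K) from by ring,
      show (2:ℝ) / K * s = 2 * (s / K) from by ring]
  set t := L / K with ht
  set u := s / K with hu
  have hLt : L = t * K := by rw [ht]; field_simp
  have hst : s = u * K := by rw [hu]; field_simp
  have hu2 : u ^ 2 = 10 - 5 * t + t ^ 2 := by
    have h0 : (u ^ 2 - (10 - 5 * t + t ^ 2)) * K ^ 2 = 0 := by
      have h := hs
      rw [hLt, hst] at h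
      linear_combination h
    rcases mul_eq_zero.1 h0 with h | h
    · linarith
    · exact absurd h (pow_ne_zero 2 hK')
  rw [hLt]
  linear_combination (K * l1 ^ 3 * (20 - 8 * t + 8 * u)) * hu2
end
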